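/- For μ > 0 and e > 0, the function k_{e,μ}(p) := 1/(|p²−μ|+e) − 1/(p²+μ+e) on ℝ³ is nonnegative and integrable, with ∫_{ℝ³} k_{e,μ}(p) dp = (2π)³ μ^{1/2} f(e/μ), where f is defined by f(t) = (1/(2π²)) ∫₀^∞ p²(1/(|p²−1|+t) − 1/(p²+1+t)) dp. -/

import Mathlib

/-!
Since `|s - μ| ≤ s + μ` for `s, μ ≥ 0`, the kernel is nonnegative; it is `O(|p|⁻⁴)` because the
numerator of `1/A - 1/B = (B - A)/(AB)` is at most `2μ` while `A` and `B` are comparable, so it is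
integrable on `ℝ³`. In polar coordinates the integral is `4π ∫₀^∞ r² k(r) dr`, and the
substitution `r = √μ x` turns this into `4π √μ ∫₀^∞ x² k_{e/μ,1}(x) dx = (2π)³ √μ f(e/μ)`.
-/

open Real Set MeasureTheory

noncomputable def fInt (t : ℝ) : ℝ :=
  (1 / (2 * Real.pi ^ 2)) *
    ∫ p in Set.Ioi (0 : ℝ), p ^ 2 * (1 / (|p ^ 2 - 1| + t) - 1 / (p ^ 2 + 1 + t))

noncomputable def kFun (e μ : ℝ) (p : EuclideanSpace ℝ (Fin 3)) : ℝ :=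
  1 / (|‖p‖ ^ 2 - μ| + e) - 1 / (‖p‖ ^ 2 + μ + e)

noncomputable def kProfile (e μ s : ℝ) : ℝ :=
  1 / (|s - μ| + e) - 1 / (s + μ + e)

lemma kFun_eq_kProfile (e μ : ℝ) (p : EuclideanSpace ℝ (Fin 3)) :
    kFun e μ p = kProfile e μ (‖p‖ ^ 2) := rfl

lemma fInt_eq_integral_kProfile (t : ℝ) :
    fInt t = (1 / (2 * π ^ 2)) * ∫ x in Ioi (0 : ℝ), x ^ 2 * kProfile t 1 (x ^ 2) := rfl

section Profile

variable {e μ s : ℝ}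

lemma kProfile_nonneg (he : 0 < e) (hμ : 0 ≤ μ) (hs : 0 ≤ s) : 0 ≤ kProfile e μ s := by
  have : |s - μ| ≤ s + μ := abs_sub_le_iff.2 ⟨by linarith, by linarith⟩
  exact sub_nonneg.2 <| one_div_le_one_div_of_le (by positivity) (by linarith)

lemma kProfile_le (he : 0 < e) (hμ : 0 ≤ μ) (hs : 0 ≤ s) :
    kProfile e μ s ≤ 2 * μ * (e + 2 * μ) / (e * (s + μ + e) ^ 2) := by
  set A := |s - μ| + e
  set B := s + μ + e
  have hA : 0 < A := by positivity
  have hB : 0 < B := by positivity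
  have hBA : B - A ≤ 2 * μ := by linarith [le_abs_self (s - μ)]
  have hAB : e * B ≤ (e + 2 * μ) * A := by
    nlinarith [le_abs_self (s - μ), abs_nonneg (s - μ)]
  calc kProfile e μ s = (B - A) / (A * B) := by
        rw [kProfile, div_sub_div _ _ hA.ne' hB.ne']; ring
    _ ≤ 2 * μ / (A * B) := by gcongr
    _ ≤ 2 * μ * (e + 2 * μ) / (e * B ^ 2) := by
        rw [div_le_div_iff₀ (by positivity) (by positivity)]
        nlinarith [mul_le_mul_of_nonneg_left hAB (by positivity : 0 ≤ 2 * μ * B)]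

lemma kProfile_le_mul_one_add_rpow (he : 0 < e) (hμ : 0 ≤ μ) (hs : 0 ≤ s) :
    kProfile e μ s ≤
      2 * μ * (e + 2 * μ) / (e * min 1 (μ + e) ^ 2) * (1 + s) ^ (-(4 : ℝ) / 2) := by
  set c := min 1 (μ + e)
  have hc : 0 < c := lt_min one_pos (by positivity)
  have hcB : c * (1 + s) ≤ s + μ + e := by
    nlinarith [min_le_left 1 (μ + e), min_le_right 1 (μ + e)]
  rw [show -(4 : ℝ) / 2 = ((-2 : ℤ) : ℝ) by norm_num, rpow_intCast, zpow_neg, zpow_ofNat,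
    ← div_eq_mul_inv, div_div]
  refine (kProfile_le he hμ hs).trans
    (div_le_div_of_nonneg_left (by positivity) (by positivity) ?_)
  rw [mul_assoc, ← mul_pow]
  gcongr

end Profile

lemma kProfile_mul {μ : ℝ} (hμ : 0 < μ) (e s : ℝ) :
    kProfile e μ (μ * s) = μ⁻¹ * kProfile (e / μ) 1 s := by
  have h1 : |μ * s - μ| + e = μ * (|s - 1| + e / μ) := by
    rw [← mul_sub_one, abs_mul, abs_of_pos hμ]; field_simp
  have h2 : μ * s + μ + e = μ * (s + 1 + e / μ) := by field_simp
  simp only [kProfile, h1, h2, one_div, mul_inv, mul_sub]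

lemma integral_sq_mul_kProfile {μ : ℝ} (hμ : 0 < μ) (e : ℝ) :
    ∫ y in Ioi (0 : ℝ), y ^ 2 * kProfile e μ (y ^ 2) =
      √μ * ∫ x in Ioi (0 : ℝ), x ^ 2 * kProfile (e / μ) 1 (x ^ 2) := by
  have hsq : ∀ x : ℝ, (√μ * x) ^ 2 = μ * x ^ 2 := fun x => by rw [mul_pow, sq_sqrt hμ.le]
  have hscale := integral_comp_mul_left_Ioi' (fun y => y ^ 2 * kProfile e μ (y ^ 2)) 0
    (sqrt_pos.2 hμ)
  rw [mul_zero] at hscale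
  rw [← hscale, smul_eq_mul]
  congr 1
  refine setIntegral_congr_fun measurableSet_Ioi fun x _ => ?_
  rw [hsq, kProfile_mul hμ]
  field_simp

lemma continuous_kFun {e μ : ℝ} (he : 0 < e) (hμ : 0 ≤ μ) : Continuous (kFun e μ) := by
  have hA : Continuous fun p : EuclideanSpace ℝ (Fin 3) => |‖p‖ ^ 2 - μ| + e := by fun_prop
  have hB : Continuous fun p : EuclideanSpace ℝ (Fin 3) => ‖p‖ ^ 2 + μ + e := by fun_prop
  exact (continuous_const.div hA fun p => by positivity).sub
    (continuous_const.div hB fun p => by positivity)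

lemma integrable_kFun {e μ : ℝ} (he : 0 < e) (hμ : 0 ≤ μ) : Integrable (kFun e μ) := by
  have hdim : (Module.finrank ℝ (EuclideanSpace ℝ (Fin 3)) : ℝ) < 4 := by
    rw [finrank_euclideanSpace_fin]; norm_num
  refine ((integrable_rpow_neg_one_add_norm_sq hdim).const_mul
    (2 * μ * (e + 2 * μ) / (e * min 1 (μ + e) ^ 2))).mono'
    (continuous_kFun he hμ).aestronglyMeasurable (ae_of_all _ fun p => ?_)
  rw [kFun_eq_kProfile, norm_of_nonneg (kProfile_nonneg he hμ (sq_nonneg _))]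
  exact kProfile_le_mul_one_add_rpow he hμ (sq_nonneg _)

lemma integral_fun_norm_euclideanSpace_fin_three {F : Type*} [NormedAddCommGroup F]
    [NormedSpace ℝ F] (f : ℝ → F) :
    ∫ x : EuclideanSpace ℝ (Fin 3), f ‖x‖ = (4 * π) • ∫ y in Ioi (0 : ℝ), y ^ 2 • f y := by
  rw [integral_fun_norm_addHaar, finrank_euclideanSpace_fin, measureReal_def,
    EuclideanSpace.volume_ball_fin_three]
  simp only [ENNReal.ofReal_one, one_pow, one_mul,
    ENNReal.toReal_ofReal (by positivity : 0 ≤ π * 4 / 3)]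
  rw [← Nat.cast_smul_eq_nsmul ℝ, smul_smul]
  congr 1
  ring

theorem kFun_nonneg_integrable_eval (e μ : ℝ) (he : 0 < e) (hμ : 0 < μ) :
    (∀ p : EuclideanSpace ℝ (Fin 3), 0 ≤ kFun e μ p) ∧
    Integrable (kFun e μ) volume ∧
    ∫ p : EuclideanSpace ℝ (Fin 3), kFun e μ p =
      (2 * Real.pi) ^ 3 * Real.sqrt μ * fInt (e / μ) := by
  refine ⟨fun p => kProfile_nonneg he hμ.le (sq_nonneg _), integrable_kFun he hμ.le, ?_⟩
  calc ∫ p, kFun e μ p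
      = 4 * π * ∫ y in Ioi (0 : ℝ), y ^ 2 * kProfile e μ (y ^ 2) :=
        integral_fun_norm_euclideanSpace_fin_three fun r => kProfile e μ (r ^ 2)
    _ = (2 * π) ^ 3 * √μ * fInt (e / μ) := by
        rw [integral_sq_mul_kProfile hμ, fInt_eq_integral_kProfile]
        field_simp
        ring
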